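/- arXiv:1502.05245 — 4 statements merged into one kernel-verified Lean document; each statement's English description precedes it below -/
import Mathlib

section
/- Let F_1, ..., F_k be pairwise complementary factors of M_d ⊗ M_n, each isomorphic to M_n, and suppose there is a rank-one projection |h⟩⟨h| in the linear span of F_1 ∪ ... ∪ F_k. Then k ≥ d + (d-1)/(n-1). -/
/-!
Let `E_i` be the trace-preserving Hilbert–Schmidt projection onto `F_i`. Complementarity forces
`E_j` to send `F_i` (`i ≠ j`) to scalars, `E_j A = τ(A) I`, so for `P = |h⟩⟨h|` in the span of the
`F_i` one gets `∑ E_i P = P + (k - 1)/(dn) I`. Applying `Tr(P ·)` gives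
`1 + (k - 1)/(dn) = ∑ ⟨h, E_i P h⟩`, and each term is at most `1/d`: it equals `‖T_i‖₂² / d`, where
`T_i` is the partial trace of the unit rank-one projection `U_i* P U_i`, and `‖T_i‖₂ ≤ 1` by
Cauchy–Schwarz. Thus `1 + (k - 1)/(dn) ≤ k/d`, which rearranges to the bound.
-/

open Matrix Kronecker

/-- The linear embedding `B ↦ U (I ⊗ B) U*` whose range is the factor
`U (ℂI ⊗ M_n) U*` of `M_d ⊗ M_n`, for a unitary `U`. -/
noncomputable def factorEmbed (d n : ℕ) (U : Matrix (Fin d × Fin n) (Fin d × Fin n) ℂ) :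
    Matrix (Fin n) (Fin n) ℂ →ₗ[ℂ] Matrix (Fin d × Fin n) (Fin d × Fin n) ℂ where
  toFun B := U * ((1 : Matrix (Fin d) (Fin d) ℂ) ⊗ₖ B) * Uᴴ
  map_add' B C := by simp [Matrix.kronecker_add, Matrix.mul_add, Matrix.add_mul]
  map_smul' c B := by simp [Matrix.kronecker_smul, Matrix.mul_smul, Matrix.smul_mul]

namespace Matrix

section PartialTrace

variable {m ι R : Type*} [Fintype m] [Semiring R]

def partialTraceLeft : Matrix (m × ι) (m × ι) R →ₗ[R] Matrix ι ι R where
  toFun Z := of fun a b => ∑ x, Z (x, a) (x, b)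
  map_add' Z W := by ext; simp [Finset.sum_add_distrib]
  map_smul' c Z := by ext; simp [Finset.mul_sum]

@[simp]
lemma partialTraceLeft_apply (Z : Matrix (m × ι) (m × ι) R) (a b : ι) :
    partialTraceLeft Z a b = ∑ x, Z (x, a) (x, b) := rfl

lemma partialTraceLeft_one_kronecker [DecidableEq m] (B : Matrix ι ι R) :
    partialTraceLeft ((1 : Matrix m m R) ⊗ₖ B) = (Fintype.card m : R) • B := by
  ext a b
  simp

lemma partialTraceLeft_conjTranspose [StarRing R] (Z : Matrix (m × ι) (m × ι) R) :
    partialTraceLeft Zᴴ = (partialTraceLeft Z)ᴴ := by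
  ext a b
  simp [star_sum]

variable [Fintype ι]

lemma trace_partialTraceLeft (Z : Matrix (m × ι) (m × ι) R) :
    (partialTraceLeft Z).trace = Z.trace := by
  simp only [trace, diag, partialTraceLeft_apply, Fintype.sum_prod_type]
  exact Finset.sum_comm

lemma partialTraceLeft_mul_one_kronecker [DecidableEq m] (Z : Matrix (m × ι) (m × ι) R)
    (C : Matrix ι ι R) :
    partialTraceLeft (Z * ((1 : Matrix m m R) ⊗ₖ C)) = partialTraceLeft Z * C := by
  ext a b
  simp only [partialTraceLeft_apply, mul_apply, kroneckerMap_apply, one_apply, ite_mul, one_mul,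
    zero_mul, mul_ite, mul_zero, Fintype.sum_prod_type, Finset.sum_ite_irrel,
    Finset.sum_const_zero, Finset.sum_ite_eq', Finset.mem_univ, ↓reduceIte, Finset.sum_mul]
  exact Finset.sum_comm

end PartialTrace

end Matrix

open Matrix

section Factor

variable {d n : ℕ}

lemma factorEmbed_apply (U : Matrix (Fin d × Fin n) (Fin d × Fin n) ℂ)
    (B : Matrix (Fin n) (Fin n) ℂ) :
    factorEmbed d n U B = U * ((1 : Matrix (Fin d) (Fin d) ℂ) ⊗ₖ B) * Uᴴ := rfl

lemma factorEmbed_one {U : Matrix (Fin d × Fin n) (Fin d × Fin n) ℂ}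
    (hU : U ∈ unitaryGroup (Fin d × Fin n) ℂ) : factorEmbed d n U 1 = 1 := by
  rw [factorEmbed_apply, one_kronecker_one, Matrix.mul_one]
  exact Unitary.mul_star_self_of_mem hU

lemma conjTranspose_mul_factorEmbed_mul {U : Matrix (Fin d × Fin n) (Fin d × Fin n) ℂ}
    (hU : U ∈ unitaryGroup (Fin d × Fin n) ℂ) (B : Matrix (Fin n) (Fin n) ℂ) :
    Uᴴ * factorEmbed d n U B * U = (1 : Matrix (Fin d) (Fin d) ℂ) ⊗ₖ B := by
  have hUU : Uᴴ * U = 1 := Unitary.star_mul_self_of_mem hU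
  rw [factorEmbed_apply, ← Matrix.mul_assoc, ← Matrix.mul_assoc, hUU, Matrix.one_mul,
    Matrix.mul_assoc, hUU, Matrix.mul_one]

lemma trace_conjTranspose_mul_factorEmbed (U X : Matrix (Fin d × Fin n) (Fin d × Fin n) ℂ)
    (C : Matrix (Fin n) (Fin n) ℂ) :
    (Xᴴ * factorEmbed d n U C).trace = ((partialTraceLeft (Uᴴ * X * U))ᴴ * C).trace := by
  rw [← partialTraceLeft_conjTranspose, ← partialTraceLeft_mul_one_kronecker,
    trace_partialTraceLeft, factorEmbed_apply, ← Matrix.mul_assoc, trace_mul_comm,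
    ← Matrix.mul_assoc, ← Matrix.mul_assoc]
  simp only [conjTranspose_mul, conjTranspose_conjTranspose, Matrix.mul_assoc]

-- The Hilbert–Schmidt orthogonal projection `E_F` onto the factor `F = U (ℂI ⊗ M_n) U*`.
noncomputable def factorCondExp (d n : ℕ) (U : Matrix (Fin d × Fin n) (Fin d × Fin n) ℂ) :
    Matrix (Fin d × Fin n) (Fin d × Fin n) ℂ →ₗ[ℂ] Matrix (Fin d × Fin n) (Fin d × Fin n) ℂ where
  toFun X := factorEmbed d n U ((d : ℂ)⁻¹ • partialTraceLeft (Uᴴ * X * U))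
  map_add' X Y := by simp [Matrix.mul_add, Matrix.add_mul, smul_add]
  map_smul' c X := by simp [smul_comm c]

lemma factorCondExp_apply (U X : Matrix (Fin d × Fin n) (Fin d × Fin n) ℂ) :
    factorCondExp d n U X = factorEmbed d n U ((d : ℂ)⁻¹ • partialTraceLeft (Uᴴ * X * U)) :=
  rfl

lemma factorCondExp_mem_range (U X : Matrix (Fin d × Fin n) (Fin d × Fin n) ℂ) :
    factorCondExp d n U X ∈ LinearMap.range (factorEmbed d n U) :=
  LinearMap.mem_range_self _ _

lemma partialTraceLeft_one_kronecker_inv_smul (hd : d ≠ 0) (B : Matrix (Fin n) (Fin n) ℂ) :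
    partialTraceLeft ((1 : Matrix (Fin d) (Fin d) ℂ) ⊗ₖ ((d : ℂ)⁻¹ • B)) = B := by
  rw [partialTraceLeft_one_kronecker, Fintype.card_fin, smul_smul,
    mul_inv_cancel₀ (Nat.cast_ne_zero.mpr hd), one_smul]

section Unitarity

variable {U : Matrix (Fin d × Fin n) (Fin d × Fin n) ℂ} (hd : d ≠ 0)
  (hU : U ∈ unitaryGroup (Fin d × Fin n) ℂ)
include hd hU

lemma partialTraceLeft_conj_factorCondExp (X : Matrix (Fin d × Fin n) (Fin d × Fin n) ℂ) :
    partialTraceLeft (Uᴴ * factorCondExp d n U X * U) = partialTraceLeft (Uᴴ * X * U) := by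
  rw [factorCondExp_apply, conjTranspose_mul_factorEmbed_mul hU,
    partialTraceLeft_one_kronecker_inv_smul hd]

lemma factorCondExp_factorEmbed (B : Matrix (Fin n) (Fin n) ℂ) :
    factorCondExp d n U (factorEmbed d n U B) = factorEmbed d n U B := by
  rw [factorCondExp_apply, conjTranspose_mul_factorEmbed_mul hU, partialTraceLeft_one_kronecker,
    Fintype.card_fin, smul_smul, inv_mul_cancel₀ (Nat.cast_ne_zero.mpr hd), one_smul]

lemma factorCondExp_one : factorCondExp d n U 1 = 1 := by
  rw [← factorEmbed_one hU, factorCondExp_factorEmbed hd hU]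

lemma trace_factorCondExp (X : Matrix (Fin d × Fin n) (Fin d × Fin n) ℂ) :
    (factorCondExp d n U X).trace = X.trace := by
  have conj_trace : ∀ Y : Matrix (Fin d × Fin n) (Fin d × Fin n) ℂ, (Uᴴ * Y * U).trace = Y.trace :=
    fun Y => by
      rw [trace_mul_cycle, show U * Uᴴ = 1 from Unitary.mul_star_self_of_mem hU, Matrix.one_mul]
  rw [← conj_trace, ← trace_partialTraceLeft, partialTraceLeft_conj_factorCondExp hd hU,
    trace_partialTraceLeft, conj_trace]

lemma trace_conjTranspose_factorCondExp_mul (X : Matrix (Fin d × Fin n) (Fin d × Fin n) ℂ)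
    {Y : Matrix (Fin d × Fin n) (Fin d × Fin n) ℂ} (hY : Y ∈ LinearMap.range (factorEmbed d n U)) :
    ((factorCondExp d n U X)ᴴ * Y).trace = (Xᴴ * Y).trace := by
  obtain ⟨C, rfl⟩ := hY
  rw [trace_conjTranspose_mul_factorEmbed, trace_conjTranspose_mul_factorEmbed,
    partialTraceLeft_conj_factorCondExp hd hU]

end Unitarity

end Factor

open scoped ComplexOrder

-- The paper's complementarity of two subalgebras.
def Matrix.TracelessOrthogonal {m : Type*} [Fintype m] (S T : Submodule ℂ (Matrix m m ℂ)) :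
    Prop :=
  ∀ X ∈ S, ∀ Y ∈ T, X.trace = 0 → Y.trace = 0 → (Xᴴ * Y).trace = 0

section Complementary

variable {d n : ℕ} {V : Matrix (Fin d × Fin n) (Fin d × Fin n) ℂ} (hd : d ≠ 0)
  (hV : V ∈ unitaryGroup (Fin d × Fin n) ℂ)
  {S : Submodule ℂ (Matrix (Fin d × Fin n) (Fin d × Fin n) ℂ)}
  (hSV : TracelessOrthogonal S (LinearMap.range (factorEmbed d n V)))
include hd hV hSV

lemma factorCondExp_eq_zero_of_tracelessOrthogonal
    {X : Matrix (Fin d × Fin n) (Fin d × Fin n) ℂ} (hX : X ∈ S) (htr : X.trace = 0) :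
    factorCondExp d n V X = 0 := by
  rw [← trace_conjTranspose_mul_self_eq_zero_iff,
    trace_conjTranspose_factorCondExp_mul hd hV X (factorCondExp_mem_range V X)]
  exact hSV X hX _ (factorCondExp_mem_range V X) htr
    (by rw [trace_factorCondExp hd hV, htr])

lemma factorCondExp_eq_smul_one_of_tracelessOrthogonal (hn : n ≠ 0) (hS : 1 ∈ S)
    {A : Matrix (Fin d × Fin n) (Fin d × Fin n) ℂ} (hA : A ∈ S) :
    factorCondExp d n V A = (A.trace / (d * n)) • 1 := by
  set c := A.trace / (d * n)
  have htr : (A - c • 1).trace = 0 := by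
    rw [trace_sub, trace_smul, trace_one, Fintype.card_prod, Fintype.card_fin, Fintype.card_fin,
      smul_eq_mul, Nat.cast_mul, div_mul_cancel₀ _ (by simp [hd, hn]), sub_self]
  have hzero := factorCondExp_eq_zero_of_tracelessOrthogonal hd hV hSV
    (S.sub_mem hA (S.smul_mem c hS)) htr
  rwa [map_sub, map_smul, factorCondExp_one hd hV, sub_eq_zero] at hzero

end Complementary

section Family

variable {d n : ℕ} {ι : Type*} [Fintype ι] [DecidableEq ι]
  {U : ι → Matrix (Fin d × Fin n) (Fin d × Fin n) ℂ} (hd : d ≠ 0) (hn : n ≠ 0)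
  (hU : ∀ i, U i ∈ unitaryGroup (Fin d × Fin n) ℂ)
  (hcompl : Pairwise fun i j =>
    TracelessOrthogonal (LinearMap.range (factorEmbed d n (U i)))
      (LinearMap.range (factorEmbed d n (U j))))
include hd hn hU hcompl

lemma sum_factorCondExp_of_mem {i : ι} {A : Matrix (Fin d × Fin n) (Fin d × Fin n) ℂ}
    (hA : A ∈ LinearMap.range (factorEmbed d n (U i))) :
    ∑ j, factorCondExp d n (U j) A = A + (((Fintype.card ι - 1) * A.trace) / (d * n)) • 1 := by
  have hone : (1 : Matrix (Fin d × Fin n) (Fin d × Fin n) ℂ) ∈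
      LinearMap.range (factorEmbed d n (U i)) := ⟨1, factorEmbed_one (hU i)⟩
  obtain ⟨B, rfl⟩ := hA
  rw [← Finset.add_sum_erase _ _ (Finset.mem_univ i), factorCondExp_factorEmbed hd (hU i),
    Finset.sum_congr rfl fun j hj => factorCondExp_eq_smul_one_of_tracelessOrthogonal hd (hU j)
      (hcompl (Finset.ne_of_mem_erase hj).symm) hn hone (LinearMap.mem_range_self _ B),
    Finset.sum_const, Finset.card_erase_of_mem (Finset.mem_univ i), Finset.card_univ,
    ← Nat.cast_smul_eq_nsmul ℂ, smul_smul, Nat.cast_pred (Fintype.card_pos_iff.mpr ⟨i⟩),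
    mul_div_assoc]

lemma sum_factorCondExp_of_mem_iSup {X : Matrix (Fin d × Fin n) (Fin d × Fin n) ℂ}
    (hX : X ∈ ⨆ i, LinearMap.range (factorEmbed d n (U i))) :
    ∑ j, factorCondExp d n (U j) X = X + (((Fintype.card ι - 1) * X.trace) / (d * n)) • 1 := by
  induction hX using Submodule.iSup_induction' with
  | mem i A hA => exact sum_factorCondExp_of_mem hd hn hU hcompl hA
  | zero => simp
  | add X Y _ _ ihX ihY =>
    simp only [map_add, Finset.sum_add_distrib, ihX, ihY, trace_add, mul_add, add_div, add_smul]
    abel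

end Family

lemma Matrix.dotProduct_star_self_eq_sum_normSq {m : Type*} [Fintype m] (v : m → ℂ) :
    star v ⬝ᵥ v = ((∑ i, Complex.normSq (v i) : ℝ) : ℂ) := by
  simp [dotProduct, Complex.normSq_eq_conj_mul_self]

lemma Matrix.trace_conjTranspose_mul_self_eq_sum_normSq {m n : Type*} [Fintype m] [Fintype n]
    (A : Matrix m n ℂ) : (Aᴴ * A).trace = ((∑ i, ∑ j, Complex.normSq (A i j) : ℝ) : ℂ) := by
  simp only [trace, diag_apply, mul_apply, conjTranspose_apply, RCLike.star_def,
    Complex.ofReal_sum, Complex.normSq_eq_conj_mul_self]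
  exact Finset.sum_comm

lemma Matrix.sum_normSq_partialTraceLeft_vecMulVec_le {m ι : Type*} [Fintype m] [Fintype ι]
    (g : m × ι → ℂ) (hg : ∑ p, Complex.normSq (g p) = 1) :
    ∑ a, ∑ b, Complex.normSq (partialTraceLeft (vecMulVec g (star g)) a b) ≤ 1 := by
  set r : ι → ℝ := fun a => ∑ x, Complex.normSq (g (x, a))
  have hr : ∑ a, r a = 1 := by rw [← hg, Fintype.sum_prod_type, Finset.sum_comm]
  have entry_le (a b : ι) :
      Complex.normSq (partialTraceLeft (vecMulVec g (star g)) a b) ≤ r a * r b := by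
    have h_norm : ‖partialTraceLeft (vecMulVec g (star g)) a b‖ ≤
        ∑ x, ‖g (x, a)‖ * ‖g (x, b)‖ := by
      simpa [vecMulVec_apply] using norm_sum_le Finset.univ fun x => g (x, a) * star (g (x, b))
    rw [← Complex.sq_norm]
    calc _ ≤ (∑ x, ‖g (x, a)‖ * ‖g (x, b)‖) ^ 2 := pow_le_pow_left₀ (norm_nonneg _) h_norm 2
      _ ≤ (∑ x, ‖g (x, a)‖ ^ 2) * ∑ x, ‖g (x, b)‖ ^ 2 := Finset.sum_mul_sq_le_sq_mul_sq _ _ _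
      _ = r a * r b := by simp only [r, Complex.sq_norm]
  calc _ ≤ ∑ a, ∑ b, r a * r b :=
        Finset.sum_le_sum fun a _ => Finset.sum_le_sum fun b _ => entry_le a b
    _ = 1 := by rw [← Finset.sum_mul_sum, hr, one_mul]

lemma trace_vecMulVec_mul_factorCondExp_le {d n : ℕ}
    {U : Matrix (Fin d × Fin n) (Fin d × Fin n) ℂ} (hU : U ∈ unitaryGroup (Fin d × Fin n) ℂ)
    {h : Fin d × Fin n → ℂ} (hh : star h ⬝ᵥ h = 1) :
    (vecMulVec h (star h) * factorCondExp d n U (vecMulVec h (star h))).trace ≤ (d : ℂ)⁻¹ := by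
  set g := Uᴴ *ᵥ h
  have hconj : Uᴴ * vecMulVec h (star h) * U = vecMulVec g (star g) := by
    rw [mul_vecMulVec, vecMulVec_mul, star_mulVec, conjTranspose_conjTranspose]
  have hg : ∑ p, Complex.normSq (g p) = 1 := by
    rw [← Complex.ofReal_inj, ← dotProduct_star_self_eq_sum_normSq, star_mulVec,
      conjTranspose_conjTranspose, ← dotProduct_mulVec, mulVec_mulVec,
      show U * Uᴴ = 1 from Unitary.mul_star_self_of_mem hU, one_mulVec, hh, Complex.ofReal_one]
  have hP : (vecMulVec h (star h))ᴴ = vecMulVec h (star h) := by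
    rw [conjTranspose_vecMulVec, star_star]
  nth_rw 1 [← hP]
  rw [factorCondExp_apply, map_smul, Matrix.mul_smul, trace_smul, smul_eq_mul,
    trace_conjTranspose_mul_factorEmbed, hconj, trace_conjTranspose_mul_self_eq_sum_normSq]
  refine mul_le_of_le_one_right (by simp) ?_
  exact_mod_cast sum_normSq_partialTraceLeft_vecMulVec_le g hg

lemma add_sub_one_div_sub_one_le {d n k : ℝ} (hd : 0 < d) (hn : 1 ≤ n) (hk : 1 ≤ k)
    (h : 1 + (k - 1) / (d * n) ≤ k * d⁻¹) : d + (d - 1) / (n - 1) ≤ k := by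
  have hdn : d * n + (k - 1) ≤ k * n := by
    have := mul_le_mul_of_nonneg_left h (by positivity : 0 ≤ d * n)
    field_simp at this
    linarith
  rcases hn.eq_or_lt with rfl | hn
  · simp only [sub_self, div_zero, add_zero]
    linarith
  · rw [← le_sub_iff_add_le', div_le_iff₀ (by linarith)]
    nlinarith

/-- if `F₁,…,F_k` are pairwise complementary factors of `M_d ⊗ M_n`,
each isomorphic to `M_n` (i.e. `Fᵢ = Uᵢ(ℂI ⊗ M_n)Uᵢ*` with `Uᵢ` unitary), and the
rank-one projection `|h⟩⟨h|` of a unit vector `h` lies in their linear span, then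
`k ≥ d + (d-1)/(n-1)`. -/
theorem stmt_9 (d n k : ℕ)
    (U : Fin k → Matrix (Fin d × Fin n) (Fin d × Fin n) ℂ)
    (hU : ∀ i, U i ∈ Matrix.unitaryGroup (Fin d × Fin n) ℂ)
    (hcompl : ∀ i j, i ≠ j →
      ∀ X ∈ LinearMap.range (factorEmbed d n (U i)),
      ∀ Y ∈ LinearMap.range (factorEmbed d n (U j)),
        X.trace = 0 → Y.trace = 0 → (Xᴴ * Y).trace = 0)
    (h : Fin d × Fin n → ℂ)
    (hunit : ∑ p, ‖h p‖ ^ 2 = 1)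
    (hspan : (Matrix.of fun p q => h p * star (h q)) ∈
      ⨆ i, LinearMap.range (factorEmbed d n (U i))) :
    (d : ℝ) + ((d : ℝ) - 1) / ((n : ℝ) - 1) ≤ (k : ℝ) := by
  have hd : d ≠ 0 := by rintro rfl; simp at hunit
  have hn : n ≠ 0 := by rintro rfl; simp at hunit
  have hh : star h ⬝ᵥ h = 1 := by
    simp [dotProduct_star_self_eq_sum_normSq, ← Complex.sq_norm, hunit]
  set P := vecMulVec h (star h)
  change P ∈ _ at hspan
  have hPP : P * P = P := by rw [vecMulVec_mul_vecMulVec, hh, one_smul]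
  have htrP : P.trace = 1 := by rw [trace_vecMulVec, dotProduct_comm, hh]
  have hk : k ≠ 0 := by
    rintro rfl
    rw [iSup_of_empty, Submodule.mem_bot] at hspan
    simp [hspan] at htrP
  have hsum : ∑ j, (P * factorCondExp d n (U j) P).trace = 1 + ((k : ℂ) - 1) / (d * n) := by
    rw [← trace_sum, ← Matrix.mul_sum, sum_factorCondExp_of_mem_iSup hd hn hU
      (fun i j hij => hcompl i j hij) hspan, Matrix.mul_add, Matrix.mul_smul, Matrix.mul_one,
      trace_add, trace_smul, hPP, htrP, Fintype.card_fin, mul_one, smul_eq_mul, mul_one]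
  have hle : ∑ j, (P * factorCondExp d n (U j) P).trace ≤ k * (d : ℂ)⁻¹ := by
    refine (Finset.sum_le_sum fun j _ =>
      trace_vecMulVec_mul_factorCondExp_le (hU j) hh).trans_eq ?_
    simp
  rw [hsum] at hle
  refine add_sub_one_div_sub_one_le (by positivity) (by simpa [Nat.one_le_iff_ne_zero])
    (by simpa [Nat.one_le_iff_ne_zero]) (Complex.real_le_real.mp ?_)
  push_cast
  exact hle
end

section
/- Let p be prime and A, B ∈ SL₂(ℤ/p). Then det(A − B) = 0 if and only if A⁻¹B = I or A⁻¹B has order p. -/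
open Matrix

lemma one_add_nilp_pow {R : Type*} [Ring R] (N : R) (hN : N ^ 2 = 0) (k : ℕ) :
    (1 + N) ^ k = 1 + k • N := by
  induction k with
  | zero => simp
  | succ n ih =>
    rw [pow_succ, ih, add_smul, one_smul]
    have h0 : N * N = 0 := by rw [← pow_two]; exact hN
    rw [add_mul, one_mul, mul_add, mul_one, smul_mul_assoc, h0, smul_zero, add_zero]
    abel

lemma key_pow (p : ℕ) (hp : p.Prime) (M : Matrix (Fin 2) (Fin 2) (ZMod p))
    (hdet : M.det = 1) : M ^ p = 1 ↔ M.trace = 2 := by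
  haveI : Fact p.Prime := ⟨hp⟩
  constructor
  · intro h
    have ht := ZMod.trace_pow_card M
    rw [h] at ht
    have h1 : (1 : Matrix (Fin 2) (Fin 2) (ZMod p)).trace = 2 := by
      simp [Matrix.trace_fin_two]
    rw [h1] at ht
    have := ZMod.pow_card M.trace
    rw [← this, ← ht]
  · intro ht
    set N := M - 1 with hNdef
    have hN2 : N ^ 2 = 0 := by
      have ha : M 0 0 + M 1 1 = 2 := by
        simpa [Matrix.trace_fin_two] using ht
      have hd : M 0 0 * M 1 1 - M 0 1 * M 1 0 = 1 := by
        simpa [Matrix.det_fin_two] using hdet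
      ext i j
      fin_cases i <;> fin_cases j <;>
        simp [hNdef, pow_two, Matrix.mul_apply, Fin.sum_univ_two, Matrix.sub_apply,
          Matrix.one_apply]
      · linear_combination (M 0 0) * ha - hd
      · linear_combination (M 0 1) * ha
      · linear_combination (M 1 0) * ha
      · linear_combination (M 1 1) * ha - hd
    have hM : M = 1 + N := by rw [hNdef]; abel
    rw [hM, one_add_nilp_pow N hN2 p]
    have : (p : ℕ) • N = 0 := by
      rw [← Nat.cast_smul_eq_nsmul (ZMod p), ZMod.natCast_self, zero_smul]
    rw [this, add_zero]

/-- for `p` prime and `A, B ∈ SL₂(ℤ/p)`, `det(A − B) = 0` iff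
`A⁻¹B = 1` or `A⁻¹B` has order `p`. -/
theorem stmt_16 (p : ℕ) (hp : p.Prime)
    (A B : Matrix.SpecialLinearGroup (Fin 2) (ZMod p)) :
    ((A : Matrix (Fin 2) (Fin 2) (ZMod p)) - (B : Matrix (Fin 2) (Fin 2) (ZMod p))).det = 0 ↔
    (A⁻¹ * B = 1 ∨ orderOf (A⁻¹ * B) = p) := by
  set C := A⁻¹ * B with hC
  set M : Matrix (Fin 2) (Fin 2) (ZMod p) := (C : Matrix (Fin 2) (Fin 2) (ZMod p)) with hM
  have hdet : M.det = 1 := C.2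
  have hfac : (A : Matrix (Fin 2) (Fin 2) (ZMod p)) - B = A * (1 - M) := by
    rw [mul_sub, mul_one, hM, hC]
    congr 1
    rw [← Matrix.SpecialLinearGroup.coe_mul, ← mul_assoc, mul_inv_cancel, one_mul]
  have hdet2 : ((A : Matrix (Fin 2) (Fin 2) (ZMod p)) - B).det = 2 - M.trace := by
    rw [hfac, Matrix.det_mul, Matrix.SpecialLinearGroup.det_coe, one_mul]
    have hd : M 0 0 * M 1 1 - M 0 1 * M 1 0 = 1 := by
      simpa [Matrix.det_fin_two] using hdet
    simp [Matrix.det_fin_two, Matrix.trace_fin_two, Matrix.sub_apply, Matrix.one_apply]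
    linear_combination hd
  rw [hdet2]
  have h1 : (2 - M.trace = 0) ↔ M.trace = 2 := by constructor <;> intro h <;> linear_combination -h
  rw [h1, ← key_pow p hp M hdet]
  have hpow : M ^ p = 1 ↔ C ^ p = 1 := by
    constructor
    · intro h
      exact Subtype.ext (by simpa [Matrix.SpecialLinearGroup.coe_pow] using h)
    · intro h
      have := congrArg (Subtype.val) h
      simpa [Matrix.SpecialLinearGroup.coe_pow] using this
  rw [hpow, ← orderOf_dvd_iff_pow_eq_one]
  constructor
  · intro h
    rcases (Nat.Prime.eq_one_or_self_of_dvd hp _ h) with h1 | h1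
    · left; exact orderOf_eq_one_iff.mp h1
    · right; exact h1
  · rintro (h | h)
    · rw [h]; simp
    · rw [h]
end

section
/- Let p > 2 be prime and D ∈ ℤ/p a quadratic non-residue. For i ∈ ℤ/p and j ∈ (ℤ/p)∖{0}, define A_{i,j} = [[i, −j],[j⁻¹(1−Di²), Di]]. Then each A_{i,j} ∈ SL₂(ℤ/p), and for (i,j) ≠ (x,y) one has det(A_{i,j} − A_{x,y}) ≠ 0. -/
open Matrix

/-- for an odd prime `p` and a quadratic non-residue `D ∈ ℤ/p`, the
matrices `A_{i,j} = [[i, −j],[j⁻¹(1−Di²), Di]]` (for `i ∈ ℤ/p`, `j ≠ 0`) all have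
determinant `1`, and `det(A_{i,j} − A_{x,y}) ≠ 0` whenever `(i,j) ≠ (x,y)`. -/
theorem stmt_17 (p : ℕ) (hp : p.Prime) (hodd : p ≠ 2)
    (D : ZMod p) (hD : ¬ IsSquare D)
    (A : ZMod p → ZMod p → Matrix (Fin 2) (Fin 2) (ZMod p))
    (hA : ∀ i j, A i j = !![i, -j; j⁻¹ * (1 - D * i ^ 2), D * i]) :
    (∀ i j : ZMod p, j ≠ 0 → (A i j).det = 1) ∧
    (∀ i j x y : ZMod p, j ≠ 0 → y ≠ 0 → (i, j) ≠ (x, y) →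
      (A i j - A x y).det ≠ 0) := by
  haveI : Fact p.Prime := ⟨hp⟩
  have key : ∀ a b : ZMod p, D * a ^ 2 = b ^ 2 → a = 0 ∧ b = 0 := by
    intro a b h
    have ha : a = 0 := by
      by_contra ha
      apply hD
      exact ⟨b * a⁻¹, by field_simp; linear_combination h⟩
    subst ha
    refine ⟨rfl, ?_⟩
    have : b ^ 2 = 0 := by linear_combination -h
    exact pow_eq_zero_iff two_ne_zero |>.mp this
  constructor
  · intro i j hj
    rw [hA, Matrix.det_fin_two_of]
    field_simp
    ring
  · intro i j x y hj hy hne hdet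
    rw [hA, hA] at hdet
    have hd : (i - x) * (D * i - D * x)
        - (-j - -y) * (j⁻¹ * (1 - D * i ^ 2) - y⁻¹ * (1 - D * x ^ 2)) = 0 := by
      rw [← hdet, Matrix.det_fin_two]
      simp [Matrix.sub_apply]
    have h2 : D * (j * x - y * i) ^ 2 = (j - y) ^ 2 := by
      have hjy : j * y ≠ 0 := mul_ne_zero hj hy
      have e : j * y * ((i - x) * (D * i - D * x)
          - (-j - -y) * (j⁻¹ * (1 - D * i ^ 2) - y⁻¹ * (1 - D * x ^ 2))) = 0 := by
        rw [hd]; ring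
      field_simp at e
      linear_combination e
    obtain ⟨h3, h4⟩ := key _ _ h2
    have hjy : j = y := by linear_combination h4
    apply hne
    have hx : x = i := by
      have : j * x = j * i := by rw [hjy] at h3 ⊢; linear_combination h3
      exact mul_left_cancel₀ hj this
    simp [hx, hjy]
end

section
/- Let p > 2 be prime and D ∈ ℤ/p a quadratic non-residue. Define B_x = [[x,0],[0,−xD]] for x ∈ (ℤ/p)∖{0}, and A_{i,j} = [[i, −j],[j⁻¹(1−Di²), Di]] for i ∈ ℤ/p, j ∈ (ℤ/p)∖{0}. Then det(B_x − B_y) ≠ 0 for x ≠ y, and det(A_{i,j} − B_x) = 1 − Dx² ≠ 0 for all i, j ≠ 0, x ≠ 0. -/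
open Matrix

/-- for an odd prime `p` and a quadratic non-residue `D ∈ ℤ/p`, with
`B_x = [[x,0],[0,−xD]]` (`x ≠ 0`) and `A_{i,j} = [[i, −j],[j⁻¹(1−Di²), Di]]`
(`j ≠ 0`): `det(B_x − B_y) ≠ 0` for `x ≠ y`, and
`det(A_{i,j} − B_x) = 1 − Dx² ≠ 0`. -/
theorem stmt_18 (p : ℕ) (hp : p.Prime) (hodd : p ≠ 2)
    (D : ZMod p) (hD : ¬ IsSquare D)
    (B : ZMod p → Matrix (Fin 2) (Fin 2) (ZMod p))
    (hB : ∀ x, B x = !![x, 0; 0, -x * D])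
    (A : ZMod p → ZMod p → Matrix (Fin 2) (Fin 2) (ZMod p))
    (hA : ∀ i j, A i j = !![i, -j; j⁻¹ * (1 - D * i ^ 2), D * i]) :
    (∀ x y : ZMod p, x ≠ 0 → y ≠ 0 → x ≠ y → (B x - B y).det ≠ 0) ∧
    (∀ i j x : ZMod p, j ≠ 0 → x ≠ 0 →
      (A i j - B x).det = 1 - D * x ^ 2 ∧ (A i j - B x).det ≠ 0) := by

  haveI := Fact.mk hp
  have hD0 : D ≠ 0 := fun h => hD ⟨0, by simp [h]⟩
  constructor
  · intro x y hx hy hxy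
    rw [hB, hB]
    have h1 : (!![x, 0; 0, -x * D] - !![y, 0; 0, -y * D] : Matrix (Fin 2) (Fin 2) (ZMod p)).det
        = -D * (x - y) ^ 2 := by
      simp [Matrix.det_fin_two, Matrix.sub_apply]; ring
    rw [h1]
    have : x - y ≠ 0 := sub_ne_zero.mpr hxy
    simp [hD0, this]
  · intro i j x hj hx
    have hdet : (A i j - B x).det = 1 - D * x ^ 2 := by
      rw [hA, hB]
      have h2 : j * j⁻¹ = 1 := mul_inv_cancel₀ hj
      simp [Matrix.det_fin_two, Matrix.sub_apply]
      field_simp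
      ring
    refine ⟨hdet, hdet ▸ ?_⟩
    intro h
    have : D = (x⁻¹) ^ 2 := by
      have hx2 : x ^ 2 ≠ 0 := pow_ne_zero _ hx
      have : D * x ^ 2 = 1 := by linear_combination -h
      field_simp
      linear_combination this
    exact hD ⟨x⁻¹, by rw [this]; ring⟩
end
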